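/- arXiv:2306.06568 — 4 statements merged into one kernel-verified Lean document; each statement's English description precedes it below -/
import Mathlib

section
/- Let 𝓜 = (X, rk, m) be a finite multiplicity matroid such that the underlying matroid M = (X, rk) is loopless. Then the coefficient b_{rk(M)−1,1} of x^{rk(M)−1} y^1 in 𝔐_𝓜(x,y) equals Σ_{F ∈ 𝓕'₁(M)} Σ_{A ⊆ F, |A| ≥ 2} (−1)^{|A|} (|A|−1) m(A). -/
open Finset MvPolynomial

open scoped Classical

noncomputable section

variable {α : Type*} [Fintype α] [DecidableEq α]

/-- The three rank axioms of a matroid on ground set `Finset.univ`. -/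
def IsRankFn (rk : Finset α → ℕ) : Prop :=
  (∀ A : Finset α, rk A ≤ A.card) ∧
  (∀ A B : Finset α, A ⊆ B → rk A ≤ rk B) ∧
  (∀ A B : Finset α, rk (A ∪ B) + rk (A ∩ B) ≤ rk A + rk B)

/-- A matroid is loopless if no singleton has rank `0`. -/
def Loopless (rk : Finset α → ℕ) : Prop := ∀ e : α, rk {e} ≠ 0

/-- The multiplicity Tutte polynomial, with `X 0` playing the role of `x`
and `X 1` that of `y`. -/
def multTutte (rk : Finset α → ℕ) (m : Finset α → ℤ) : MvPolynomial (Fin 2) ℤ :=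
  ∑ A : Finset α, MvPolynomial.C (m A) *
    (MvPolynomial.X 0 - 1) ^ (rk Finset.univ - rk A) *
    (MvPolynomial.X 1 - 1) ^ (A.card - rk A)

/-- `coeffB rk m i j` is the coefficient `b_{i,j}` of `x^i y^j` in the
multiplicity Tutte polynomial. -/
def coeffB (rk : Finset α → ℕ) (m : Finset α → ℤ) (i j : ℕ) : ℤ :=
  MvPolynomial.coeff (Finsupp.single 0 i + Finsupp.single 1 j) (multTutte rk m)

/-- The (ordinary) Tutte polynomial of a matroid. -/
def tutte (rk : Finset α → ℕ) : MvPolynomial (Fin 2) ℤ :=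
  ∑ A : Finset α,
    (MvPolynomial.X 0 - 1) ^ (rk Finset.univ - rk A) *
    (MvPolynomial.X 1 - 1) ^ (A.card - rk A)

/-- `coeffT rk i j` is the coefficient `t_{i,j}` of `x^i y^j` in the Tutte polynomial. -/
def coeffT (rk : Finset α → ℕ) (i j : ℕ) : ℤ :=
  MvPolynomial.coeff (Finsupp.single 0 i + Finsupp.single 1 j) (tutte rk)

/-- `F` is a flat: it equals its closure. -/
def IsFlat (rk : Finset α → ℕ) (F : Finset α) : Prop :=
  ∀ e : α, rk (insert e F) = rk F → e ∈ F

/-- The set `𝓕_i(M)` of flats of rank `i`. -/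
def flats (rk : Finset α → ℕ) (i : ℕ) : Finset (Finset α) :=
  Finset.univ.filter (fun F => IsFlat rk F ∧ rk F = i)

/-- `C` is a circuit: `rk (C \ {e}) = |C| - 1 = rk C` for every `e ∈ C`. -/
def IsCircuit (rk : Finset α → ℕ) (C : Finset α) : Prop :=
  ∀ e ∈ C, rk (C.erase e) = C.card - 1 ∧ rk C = C.card - 1

/-- A flat is cyclic if every element of it lies on a circuit contained in it. -/
def IsCyclicFlat (rk : Finset α → ℕ) (F : Finset α) : Prop :=
  IsFlat rk F ∧ ∀ e ∈ F, ∃ C ⊆ F, IsCircuit rk C ∧ e ∈ C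

/-- The set `𝓕'_i(M)` of cyclic flats of rank `i`. -/
def cyclicFlats (rk : Finset α → ℕ) (i : ℕ) : Finset (Finset α) :=
  Finset.univ.filter (fun F => IsCyclicFlat rk F ∧ rk F = i)

/-- Two elements are parallel. -/
def Parallel (rk : Finset α → ℕ) (e f : α) : Prop :=
  rk {e, f} = 1 ∧ rk {e} = 1 ∧ rk {f} = 1

/-- `P` is a set whose distinct elements are pairwise parallel and which contains no loop. -/
def PairwiseParallel (rk : Finset α → ℕ) (P : Finset α) : Prop :=
  (∀ e ∈ P, ∀ f ∈ P, e ≠ f → Parallel rk e f) ∧ ∀ e ∈ P, rk {e} ≠ 0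

/-- `P` is a parallel class of the matroid restricted to the ground set `S`:
a maximal nonempty subset of `S` whose distinct elements are pairwise parallel
and which contains no loop. -/
def IsParallelClass (rk : Finset α → ℕ) (S P : Finset α) : Prop :=
  P ⊆ S ∧ P.Nonempty ∧ PairwiseParallel rk P ∧
    ∀ Q : Finset α, Q ⊆ S → P ⊂ Q → ¬ PairwiseParallel rk Q

/-- The parallel classes of the matroid restricted to the ground set `S`. -/
def parallelClasses (rk : Finset α → ℕ) (S : Finset α) : Finset (Finset α) :=
  Finset.univ.filter (fun P => IsParallelClass rk S P)

/-- `p`, the number of parallel classes (of the restriction to `S`). -/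
def pNum (rk : Finset α → ℕ) (S : Finset α) : ℕ := (parallelClasses rk S).card

/-- `p'`, the number of non-trivial parallel classes (of the restriction to `S`). -/
def pNum' (rk : Finset α → ℕ) (S : Finset α) : ℕ :=
  ((parallelClasses rk S).filter (fun P => 2 ≤ P.card)).card

/-- The rank function of the contraction `M/T`. -/
def contractRk (rk : Finset α → ℕ) (T : Finset α) (A : Finset α) : ℕ :=
  rk (A ∪ T) - rk T

/-- The number of parallel classes of the contraction `M/T`. -/
def pNumContract (rk : Finset α → ℕ) (T : Finset α) : ℕ :=
  pNum (contractRk rk T) (Finset.univ \ T)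


/-- The one-variable polynomial `T_M(x, 0)`. -/
def tutteAtYZero (rk : Finset α → ℕ) : Polynomial ℤ :=
  ∑ A : Finset α, Polynomial.C ((-1 : ℤ) ^ (A.card - rk A)) *
    (Polynomial.X - 1) ^ (rk Finset.univ - rk A)

end


-- ===================== auxiliary material =====================

section Aux

variable {α : Type*} [Fintype α] [DecidableEq α] {rk : Finset α → ℕ}

lemma coeff_single_single (c : ℤ) (i j k l : ℕ) :
    MvPolynomial.coeff (Finsupp.single 0 i + Finsupp.single 1 j)
      (MvPolynomial.C c * MvPolynomial.X 0 ^ k * MvPolynomial.X 1 ^ l : MvPolynomial (Fin 2) ℤ)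
      = if i = k ∧ j = l then c else 0 := by
  rw [MvPolynomial.X_pow_eq_monomial, MvPolynomial.X_pow_eq_monomial,
    MvPolynomial.C_mul_monomial, MvPolynomial.monomial_mul, MvPolynomial.coeff_monomial]
  have h : (Finsupp.single (0:Fin 2) k + Finsupp.single 1 l = Finsupp.single 0 i + Finsupp.single 1 j)
      ↔ (i = k ∧ j = l) := by
    constructor
    · intro h
      constructor
      · have := DFunLike.congr_fun h (0 : Fin 2)
        simpa [Finsupp.single_apply] using this.symm
      · have := DFunLike.congr_fun h (1 : Fin 2)
        simpa [Finsupp.single_apply] using this.symm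
    · rintro ⟨rfl, rfl⟩; rfl
  rw [if_congr h rfl rfl]
  simp

lemma coeff_term (c : ℤ) (a b i j : ℕ) :
    MvPolynomial.coeff (Finsupp.single 0 i + Finsupp.single 1 j)
      (MvPolynomial.C c * (MvPolynomial.X 0 - 1 : MvPolynomial (Fin 2) ℤ) ^ a *
        (MvPolynomial.X 1 - 1) ^ b)
    = c * ((-1) ^ (i + a) * (a.choose i : ℤ)) * ((-1) ^ (j + b) * (b.choose j : ℤ)) := by
  rw [sub_pow, sub_pow]
  simp only [one_pow, mul_one, Finset.mul_sum, Finset.sum_mul, MvPolynomial.coeff_sum]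
  have hterm : ∀ k l : ℕ,
      MvPolynomial.coeff (Finsupp.single 0 i + Finsupp.single 1 j)
        (MvPolynomial.C c * ((-1) ^ (k + a) * MvPolynomial.X 0 ^ k * (a.choose k : MvPolynomial (Fin 2) ℤ)) *
          ((-1) ^ (l + b) * MvPolynomial.X 1 ^ l * (b.choose l : MvPolynomial (Fin 2) ℤ)))
      = if i = k ∧ j = l then c * ((-1)^(k+a) * (a.choose k : ℤ)) * ((-1)^(l+b) * (b.choose l : ℤ)) else 0 := by
    intro k l
    have : MvPolynomial.C c * ((-1) ^ (k + a) * MvPolynomial.X 0 ^ k * (a.choose k : MvPolynomial (Fin 2) ℤ)) *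
          ((-1) ^ (l + b) * MvPolynomial.X 1 ^ l * (b.choose l : MvPolynomial (Fin 2) ℤ))
        = MvPolynomial.C (c * ((-1)^(k+a) * (a.choose k : ℤ)) * ((-1)^(l+b) * (b.choose l : ℤ)))
            * MvPolynomial.X 0 ^ k * MvPolynomial.X 1 ^ l := by
      simp only [map_mul, map_pow, map_neg, map_one, MvPolynomial.C_eq_coe_nat]
      ring
    rw [this, coeff_single_single]
  calc ∑ l ∈ Finset.range (b+1), ∑ k ∈ Finset.range (a+1),
        MvPolynomial.coeff (Finsupp.single 0 i + Finsupp.single 1 j)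
          (MvPolynomial.C c * ((-1) ^ (k + a) * MvPolynomial.X 0 ^ k * (a.choose k : MvPolynomial (Fin 2) ℤ)) *
            ((-1) ^ (l + b) * MvPolynomial.X 1 ^ l * (b.choose l : MvPolynomial (Fin 2) ℤ)))
      = ∑ l ∈ Finset.range (b+1), ∑ k ∈ Finset.range (a+1),
          if j = l then (if i = k then c * ((-1)^(k+a) * (a.choose k : ℤ)) * ((-1)^(l+b) * (b.choose l : ℤ)) else 0) else 0 := by
        refine Finset.sum_congr rfl fun l _ => Finset.sum_congr rfl fun k _ => ?_
        rw [hterm k l]; by_cases h1 : j = l <;> by_cases h2 : i = k <;> simp [h1, h2, and_comm]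
    _ = if j < b + 1 then if i < a + 1 then
          c * ((-1)^(i+a) * (a.choose i : ℤ)) * ((-1)^(j+b) * (b.choose j : ℤ)) else 0 else 0 := by
        simp [Finset.sum_ite_eq]
    _ = c * ((-1) ^ (i + a) * (a.choose i : ℤ)) * ((-1) ^ (j + b) * (b.choose j : ℤ)) := by
        split_ifs with h1 h2
        · rfl
        · rw [Nat.choose_eq_zero_of_lt (show a < i by omega)]; push_cast; ring
        · rw [Nat.choose_eq_zero_of_lt (show b < j by omega)]; push_cast; ring

lemma aux_rk_empty (h : IsRankFn rk) : rk ∅ = 0 :=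
  Nat.le_zero.mp (by simpa using h.1 ∅)

lemma aux_rk_pos (h : IsRankFn rk) (hl : Loopless rk) {A : Finset α}
    (hA : A.Nonempty) : 1 ≤ rk A := by
  obtain ⟨e, he⟩ := hA
  have h1 := h.2.1 {e} A (by simpa using he)
  have := hl e
  omega

lemma aux_rk_union_eq (h : IsRankFn rk) (A : Finset α) :
    ∀ T : Finset α, (∀ e ∈ T, rk (insert e A) = rk A) → rk (A ∪ T) = rk A := by
  intro T
  induction T using Finset.induction_on with
  | empty => simp
  | @insert e T he ih =>
    intro hT
    have hih : rk (A ∪ T) = rk A := ih (fun x hx => hT x (Finset.mem_insert_of_mem hx))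
    have he' : rk (insert e A) = rk A := hT e (Finset.mem_insert_self e T)
    have hsub := h.2.2 (A ∪ T) (insert e A)
    have hu : (A ∪ T) ∪ insert e A = insert e (A ∪ T) := by
      ext x; simp [Finset.mem_insert, Finset.mem_union]; tauto
    have hi : A ⊆ (A ∪ T) ∩ insert e A :=
      Finset.subset_inter Finset.subset_union_left (Finset.subset_insert e A)
    have hi' : rk A ≤ rk ((A ∪ T) ∩ insert e A) := h.2.1 _ _ hi
    have hm : rk A ≤ rk (insert e (A ∪ T)) :=
      h.2.1 _ _ ((Finset.subset_union_left).trans (Finset.subset_insert e (A ∪ T)))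
    have hfin : A ∪ insert e T = insert e (A ∪ T) := by
      ext x; simp [Finset.mem_insert, Finset.mem_union]
    rw [hfin]
    rw [hu, hih, he'] at hsub
    omega

/-- The closure of a set, as a finset. -/
noncomputable def clF (rk : Finset α → ℕ) (A : Finset α) : Finset α :=
  Finset.univ.filter (fun e => rk (insert e A) = rk A)

lemma subset_clF (A : Finset α) : A ⊆ clF rk A := by
  intro e he
  simp only [clF, Finset.mem_filter, Finset.mem_univ, true_and]
  rw [Finset.insert_eq_self.mpr he]

lemma rk_clF (h : IsRankFn rk) (A : Finset α) : rk (clF rk A) = rk A := by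
  have := aux_rk_union_eq h A (clF rk A)
    (fun e he => by simpa [clF] using he)
  rwa [Finset.union_eq_right.mpr (subset_clF A)] at this

lemma isFlat_clF (h : IsRankFn rk) (A : Finset α) : IsFlat rk (clF rk A) := by
  intro e he
  simp only [clF, Finset.mem_filter, Finset.mem_univ, true_and]
  have h1 : rk (insert e A) ≤ rk (insert e (clF rk A)) :=
    h.2.1 _ _ (Finset.insert_subset_insert e (subset_clF A))
  have h2 : rk A ≤ rk (insert e A) := h.2.1 _ _ (Finset.subset_insert e A)
  rw [he, rk_clF h A] at h1
  omega

lemma flat1_unique (h : IsRankFn rk) (hl : Loopless rk) {F F' A : Finset α}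
    (hF : IsFlat rk F) (hF1 : rk F = 1) (hF' : IsFlat rk F') (hF1' : rk F' = 1)
    (hA : A ⊆ F) (hA' : A ⊆ F') (hne : A.Nonempty) : F = F' := by
  have key : ∀ G G' : Finset α, IsFlat rk G' → rk G = 1 → rk G' = 1 →
      A ⊆ G → A ⊆ G' → G ⊆ G' := by
    intro G G' hGf' hG1 hG1' hAG hAG'
    intro e he
    have hrkA : rk A = 1 := by
      have h1 := aux_rk_pos h hl hne
      have h2 := h.2.1 A G hAG
      omega
    have hins : rk (insert e A) = 1 := by
      have h1 : rk (insert e A) ≤ rk G := h.2.1 _ _ (Finset.insert_subset he hAG)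
      have h2 : rk A ≤ rk (insert e A) := h.2.1 _ _ (Finset.subset_insert e A)
      omega
    have hsub := h.2.2 (insert e A) G'
    have hu : insert e A ∪ G' = insert e G' := by
      have : A ∪ G' = G' := Finset.union_eq_right.mpr hAG'
      rw [Finset.insert_union, this]
    have hi : rk A ≤ rk (insert e A ∩ G') :=
      h.2.1 _ _ (Finset.subset_inter ((Finset.subset_insert e A)) hAG')
    have hm : rk G' ≤ rk (insert e G') := h.2.1 _ _ (Finset.subset_insert e G')
    rw [hu] at hsub
    exact hGf' e (by omega)
  exact Finset.Subset.antisymm (key F F' hF' hF1 hF1' hA hA')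
    (key F' F hF hF1' hF1 hA' hA)

lemma clF_mem_cyclicFlats (h : IsRankFn rk) (hl : Loopless rk) {A : Finset α}
    (hA1 : rk A = 1) (hA2 : 2 ≤ A.card) : clF rk A ∈ cyclicFlats rk 1 := by
  have hflat := isFlat_clF h A
  have hrk : rk (clF rk A) = 1 := by rw [rk_clF h A, hA1]
  have hcard : 2 ≤ (clF rk A).card := le_trans hA2 (Finset.card_le_card (subset_clF A))
  simp only [cyclicFlats, Finset.mem_filter, Finset.mem_univ, true_and]
  refine ⟨⟨hflat, ?_⟩, hrk⟩
  intro e he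
  obtain ⟨f, hf, hfe⟩ := Finset.exists_mem_ne (s := clF rk A) (by omega) e
  refine ⟨{e, f}, ?_, ?_, Finset.mem_insert_self e {f}⟩
  · intro x hx
    rcases Finset.mem_insert.mp hx with rfl | hx
    · exact he
    · rwa [Finset.mem_singleton.mp hx]
  · have hcard2 : ({e, f} : Finset α).card = 2 := Finset.card_pair (Ne.symm hfe)
    have hrkpair : rk {e, f} = 1 := by
      have h1 : rk {e, f} ≤ rk (clF rk A) := by
        refine h.2.1 _ _ ?_
        intro x hx
        rcases Finset.mem_insert.mp hx with rfl | hx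
        · exact he
        · rwa [Finset.mem_singleton.mp hx]
      have h2 := aux_rk_pos h hl (show ({e, f} : Finset α).Nonempty from ⟨e, Finset.mem_insert_self e {f}⟩)
      omega
    have hrk_single : ∀ x : α, rk {x} = 1 := by
      intro x
      have h1 := aux_rk_pos h hl (show ({x} : Finset α).Nonempty from ⟨x, Finset.mem_singleton_self x⟩)
      have h2 := h.1 {x}
      simp only [Finset.card_singleton] at h2
      omega
    intro x hx
    rcases Finset.mem_insert.mp hx with rfl | hx
    · have : ({x, f} : Finset α).erase x = {f} := by
        rw [Finset.erase_insert (by simpa using hfe.symm)]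
      rw [this, hcard2, hrkpair, hrk_single f]
      exact ⟨rfl, rfl⟩
    · rw [Finset.mem_singleton.mp hx]
      have : ({e, f} : Finset α).erase f = {e} := by
        rw [Finset.pair_comm, Finset.erase_insert (by simpa using hfe)]
      rw [this, hcard2, hrkpair, hrk_single e]
      exact ⟨rfl, rfl⟩

end Aux

/-- `b_{rk(M)-1,1} = Σ_{F ∈ 𝓕'₁} Σ_{A ⊆ F, |A| ≥ 2} (-1)^{|A|} (|A|-1) m(A)`. -/
theorem stmt3 {α : Type*} [Fintype α] [DecidableEq α]
    (rk : Finset α → ℕ) (m : Finset α → ℤ)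
    (hrk : IsRankFn rk) (hm : ∀ A : Finset α, 0 < m A) (hl : Loopless rk) :
    coeffB rk m (rk Finset.univ - 1) 1 =
      ∑ F ∈ cyclicFlats rk 1,
        ∑ A ∈ F.powerset.filter (fun A => 2 ≤ A.card),
          (-1 : ℤ) ^ A.card * ((A.card : ℤ) - 1) * m A := by
  classical
  have hL : coeffB rk m (rk Finset.univ - 1) 1 =
      ∑ A ∈ Finset.univ.filter (fun A : Finset α => rk A = 1 ∧ 2 ≤ A.card),
        (-1 : ℤ) ^ A.card * ((A.card : ℤ) - 1) * m A := by
    rw [coeffB, multTutte, MvPolynomial.coeff_sum, Finset.sum_filter]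
    refine Finset.sum_congr rfl fun A _ => ?_
    rw [coeff_term]
    have hA1 : rk A ≤ A.card := hrk.1 A
    have hA2 : rk A ≤ rk Finset.univ := hrk.2.1 A Finset.univ (Finset.subset_univ A)
    rcases Nat.lt_or_ge (rk A) 1 with h0 | h1
    · -- rank 0 : A = ∅
      have h0' : rk A = 0 := by omega
      have hAe : A = ∅ := by
        by_contra hne
        have := aux_rk_pos hrk hl (Finset.nonempty_iff_ne_empty.mpr hne)
        omega
      subst hAe
      simp [h0']
    · rcases Nat.lt_or_ge (rk A) 2 with h1' | h2
      · -- rank exactly 1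
        have hr1 : rk A = 1 := by omega
        rcases Nat.lt_or_ge A.card 2 with hc1 | hc2
        · -- card ≤ 1 : contribution 0
          have : A.card - rk A = 0 := by omega
          rw [this]
          rw [if_neg (fun h => by omega)]
          simp
        · rw [if_pos ⟨hr1, hc2⟩]
          have e1 : rk Finset.univ - 1 + (rk Finset.univ - rk A)
              = 2 * (rk Finset.univ - 1) := by omega
          have e2 : rk Finset.univ - rk A = rk Finset.univ - 1 := by omega
          have e3 : 1 + (A.card - rk A) = A.card := by omega
          rw [e1, e2, e3, Nat.choose_self, Nat.choose_one_right, pow_mul]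
          have e4 : ((A.card - rk A : ℕ) : ℤ) = (A.card : ℤ) - 1 := by
            push_cast [hr1]
            omega
          rw [e4]
          norm_num
          ring
      · -- rank ≥ 2 : contribution 0
        have : (rk Finset.univ - rk A).choose (rk Finset.univ - 1) = 0 :=
          Nat.choose_eq_zero_of_lt (by omega)
        rw [this]
        rw [if_neg (fun h => by omega)]
        simp
  rw [hL]
  have hdisj : (↑(cyclicFlats rk 1) : Set (Finset α)).PairwiseDisjoint
      (fun F => F.powerset.filter (fun A => 2 ≤ A.card)) := by
    intro F hF F' hF' hne
    simp only [Finset.mem_coe, cyclicFlats, Finset.mem_filter, Finset.mem_univ, true_and]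
      at hF hF'
    refine Finset.disjoint_left.mpr fun A hA hA' => hne ?_
    simp only [Finset.mem_filter, Finset.mem_powerset] at hA hA'
    have hAne : A.Nonempty := Finset.card_pos.mp (by omega)
    exact flat1_unique hrk hl hF.1.1 hF.2 hF'.1.1 hF'.2 hA.1 hA'.1 hAne
  have hunion : (cyclicFlats rk 1).biUnion (fun F => F.powerset.filter (fun A => 2 ≤ A.card))
      = Finset.univ.filter (fun A : Finset α => rk A = 1 ∧ 2 ≤ A.card) := by
    ext A
    simp only [Finset.mem_biUnion, Finset.mem_filter, Finset.mem_powerset, Finset.mem_univ,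
      true_and]
    constructor
    · rintro ⟨F, hF, hAF, hc⟩
      simp only [cyclicFlats, Finset.mem_filter, Finset.mem_univ, true_and] at hF
      have hAne : A.Nonempty := Finset.card_pos.mp (by omega)
      have h1 := aux_rk_pos hrk hl hAne
      have h2 : rk A ≤ rk F := hrk.2.1 A F hAF
      exact ⟨by omega, hc⟩
    · rintro ⟨hr1, hc⟩
      exact ⟨clF rk A, clF_mem_cyclicFlats hrk hl hr1 hc, subset_clF A, hc⟩
  rw [← hunion, Finset.sum_biUnion hdisj]
end

section
/- Let 𝓜 = (X, rk, m) be a finite multiplicity matroid, and let 𝓜* = (X, rk*, m*) be its dual, where rk*(A) = |A| + rk(X∖A) − rk(X) and m*(A) = m(X∖A) for A ⊆ X. Then the multiplicity Tutte polynomials satisfy 𝔐_𝓜(x,y) = 𝔐_{𝓜*}(y,x). -/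
open Finset MvPolynomial

open scoped Classical

/-- `𝔐_𝓜(x,y) = 𝔐_{𝓜*}(y,x)`, where `𝓜* = (X, rk*, m*)` with
`rk*(A) = |A| + rk(X∖A) - rk(X)` and `m*(A) = m(X∖A)`. -/
theorem stmt6 {α : Type*} [Fintype α] [DecidableEq α]
    (rk : Finset α → ℕ) (m : Finset α → ℤ)
    (hrk : IsRankFn rk) (hm : ∀ A : Finset α, 0 < m A) :
    multTutte rk m =
      MvPolynomial.rename (Equiv.swap (0 : Fin 2) 1)
        (multTutte (fun A => A.card + rk (Finset.univ \ A) - rk Finset.univ)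
          (fun A => m (Finset.univ \ A))) := by
  classical
  obtain ⟨h1, h2, h3⟩ := hrk
  have hr0 : rk ∅ = 0 := Nat.le_zero.mp (by simpa using h1 ∅)
  have hkey : ∀ A : Finset α, rk Finset.univ ≤ rk A + (Finset.univ \ A).card := by
    intro A
    have hsub := h3 A (Finset.univ \ A)
    have hu : A ∪ (Finset.univ \ A) = Finset.univ := by
      ext x; simp
    have hi : A ∩ (Finset.univ \ A) = ∅ := by
      ext x; simp
    rw [hu, hi, hr0] at hsub
    have := h1 (Finset.univ \ A)
    omega
  have hinv : Function.Involutive (fun A : Finset α => Finset.univ \ A) := by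
    intro A; ext x; simp
  unfold multTutte
  rw [map_sum]
  refine Fintype.sum_equiv (Function.Involutive.toPerm _ hinv) _ _ ?_
  intro A
  have hAc : (Finset.univ \ A).card = Fintype.card α - A.card := by
    rw [Finset.card_sdiff_of_subset (Finset.subset_univ A), Finset.card_univ]
  have hAA : Finset.univ \ (Finset.univ \ A) = A := hinv A
  have hcardA : A.card ≤ Fintype.card α := by
    simpa [Finset.card_univ] using Finset.card_le_card (Finset.subset_univ A)
  have hmono : rk A ≤ rk Finset.univ := h2 _ _ (Finset.subset_univ A)
  have hAle : rk A ≤ A.card := h1 A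
  have huniv : Finset.univ \ (Finset.univ : Finset α) = ∅ := by simp
  simp only [Function.Involutive.coe_toPerm, map_mul, map_pow, rename_C, rename_X,
    map_sub, map_one, Equiv.swap_apply_left, Equiv.swap_apply_right,
    hAA, hAc, huniv, hr0, Finset.card_univ]
  have hkA := hkey A
  have e1 : Fintype.card α + 0 - rk Finset.univ -
      (Fintype.card α - A.card + rk A - rk Finset.univ) = A.card - rk A := by omega
  have e2 : Fintype.card α - A.card -
      (Fintype.card α - A.card + rk A - rk Finset.univ) = rk Finset.univ - rk A := by omega
  rw [e1, e2]
  ring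
end

section
/- Let M = (X, rk) be a finite loopless matroid. Then the coefficient t_{rk(M)−1,1} of x^{rk(M)−1} y^1 in the Tutte polynomial T_M(x,y) equals p'(M), the number of non-trivial parallel classes of M (parallel classes with at least two elements). -/
open Finset MvPolynomial

open scoped Classical

-- ===== auxiliary lemmas =====

section Aux

open Finset MvPolynomial

lemma aux_expand_sub_one_pow (s : Fin 2) (n : ℕ) : (X s - 1 : MvPolynomial (Fin 2) ℤ) ^ n
      = ∑ k ∈ range (n+1), monomial (Finsupp.single s k) ((-1:ℤ)^(n-k) * n.choose k) := by
  rw [sub_eq_add_neg, add_pow]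
  refine Finset.sum_congr rfl fun k _ => ?_
  have h1 : ((-1 : MvPolynomial (Fin 2) ℤ)) ^ (n - k) = C ((-1 : ℤ)^(n-k)) := by
    rw [map_pow, map_neg, map_one]
  have h2 : ((n.choose k : ℕ) : MvPolynomial (Fin 2) ℤ) = C ((n.choose k : ℤ)) := by
    simp
  rw [h1, h2, X_pow_eq_monomial, mul_assoc, ← C_mul, ← MvPolynomial.monomial_zero',
    MvPolynomial.monomial_mul]
  simp

lemma aux_coeff_xa_yb (a b i j : ℕ) :
    MvPolynomial.coeff (Finsupp.single 0 i + Finsupp.single 1 j)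
      ((X 0 - 1 : MvPolynomial (Fin 2) ℤ) ^ a * (X 1 - 1) ^ b)
    = (((-1:ℤ)^(a-i) * a.choose i)) * ((-1:ℤ)^(b-j) * b.choose j) := by
  rw [aux_expand_sub_one_pow, aux_expand_sub_one_pow, Finset.sum_mul_sum]
  simp only [MvPolynomial.monomial_mul]
  rw [MvPolynomial.coeff_sum]
  simp only [MvPolynomial.coeff_sum, MvPolynomial.coeff_monomial]
  rw [Finset.sum_eq_single i]
  · rw [Finset.sum_eq_single j]
    · rw [if_pos rfl]
    · intro l _ hl
      rw [if_neg]
      intro h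
      exact hl (by simpa using DFunLike.congr_fun h 1)
    · intro hj
      simp only [Finset.mem_range] at hj
      rw [Nat.choose_eq_zero_of_lt (by omega : b < j)]
      simp
  · intro k _ hk
    rw [Finset.sum_eq_zero]
    intro l _
    rw [if_neg]
    intro h
    exact hk (by simpa using DFunLike.congr_fun h 0)
  · intro hi
    simp only [Finset.mem_range] at hi
    rw [Nat.choose_eq_zero_of_lt (by omega : a < i)]
    simp

def hFun (k : ℕ) : ℤ := (-1:ℤ)^(k-2) * ((k-1 : ℕ) : ℤ)

lemma hFun_zero : hFun 0 = 0 := by simp [hFun]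
lemma hFun_one : hFun 1 = 0 := by simp [hFun]
lemma hFun_ss (i : ℕ) : hFun (i+2) = (-1:ℤ)^i * (i+1 : ℕ) := by
  simp [hFun]

lemma aux_Dval (m : ℕ) :
    (∑ k ∈ range (m+1), (m.choose k : ℤ) * hFun (k+1)) = if m = 1 then 1 else 0 := by
  cases m with
  | zero => simp [hFun_one]
  | succ n =>
    rw [Finset.sum_range_succ']
    have key : ∀ i, ((n+1).choose (i+1) : ℤ) * hFun (i+2)
        = (n+1 : ℤ) * ((-1:ℤ)^i * (n.choose i : ℤ)) := by
      intro i
      have h := Nat.add_one_mul_choose_eq n i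
      have h2 : ((n+1 : ℕ) * n.choose i : ℤ) = ((n+1).choose (i+1) * (i+1) : ℕ) := by
        exact_mod_cast congrArg (Nat.cast : ℕ → ℤ) h
      rw [hFun_ss]
      push_cast at h2 ⊢
      linear_combination (-(-1:ℤ)^i) * h2
    have hz : ((n+1).choose 0 : ℤ) * hFun (0+1) = 0 := by
      norm_num [hFun]
    simp only [key, hz, add_zero]
    rw [← Finset.mul_sum, Int.alternating_sum_range_choose]
    split_ifs with h1 h2 h3 <;> simp_all

lemma aux_Gval (m : ℕ) :
    (∑ k ∈ range (m+1), (m.choose k : ℤ) * hFun k) = if 2 ≤ m then 1 else 0 := by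
  induction m with
  | zero => simp [hFun_zero]
  | succ m ih =>
    have step : (∑ k ∈ range (m+1+1), ((m+1).choose k : ℤ) * hFun k)
        = (∑ k ∈ range (m+1), (m.choose k : ℤ) * hFun (k+1))
          + ∑ k ∈ range (m+1), (m.choose k : ℤ) * hFun k := by
      rw [Finset.sum_range_succ' (fun k => ((m+1).choose k : ℤ) * hFun k) (m+1)]
      have h0 : ((m+1).choose 0 : ℤ) * hFun 0 = 0 := by simp [hFun_zero]
      rw [h0, add_zero]
      have key : ∀ i, (((m+1).choose (i+1) : ℕ) : ℤ) * hFun (i+1)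
          = (m.choose i : ℤ) * hFun (i+1) + (m.choose (i+1) : ℤ) * hFun (i+1) := by
        intro i
        rw [Nat.choose_succ_succ]
        push_cast
        ring
      rw [Finset.sum_congr rfl (fun i _ => key i), Finset.sum_add_distrib]
      congr 1
      rw [Finset.sum_range_succ' (fun k => (m.choose k : ℤ) * hFun k) m]
      rw [Finset.sum_range_succ]
      have h1 : ((m.choose (m+1) : ℕ) : ℤ) * hFun (m+1) = 0 := by
        rw [Nat.choose_eq_zero_of_lt (by omega)]; simp
      have h2 : ((m.choose 0 : ℕ) : ℤ) * hFun 0 = 0 := by simp [hFun_zero]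
      rw [h1, h2, add_zero]
      try rfl
    rw [step, aux_Dval, ih]
    split_ifs <;> omega

variable {α : Type*} [Fintype α] [DecidableEq α] {rk : Finset α → ℕ}

lemma aux_rk_singleton (hrk : IsRankFn rk) (hl : Loopless rk) (e : α) : rk {e} = 1 := by
  have h1 := hrk.1 {e}
  have h2 := hl e
  simp at h1
  omega

lemma aux_pp_subset {A B : Finset α} (h : A ⊆ B) (hB : PairwiseParallel rk B) :
    PairwiseParallel rk A :=
  ⟨fun e he f hf => hB.1 e (h he) f (h hf), fun e he => hB.2 e (h he)⟩

lemma aux_parallel_symm {e f : α} (h : Parallel rk e f) : Parallel rk f e := by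
  refine ⟨?_, h.2.2, h.2.1⟩
  rw [Finset.pair_comm]; exact h.1

lemma aux_parallel_trans (hrk : IsRankFn rk) {e p q : α} (hep : Parallel rk e p)
    (heq : Parallel rk e q) (hpq : p ≠ q) : Parallel rk p q := by
  refine ⟨?_, hep.2.2, heq.2.2⟩
  have hsub := hrk.2.2 {e, p} {e, q}
  have hmem : ({e} : Finset α) ⊆ ({e, p} ∩ {e, q}) := by
    intro x hx; simp at hx; subst hx; simp
  have h1 : 1 ≤ rk ({e, p} ∩ {e, q}) := by
    have := hrk.2.1 _ _ hmem
    rw [hep.2.1] at this; exact this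
  have h2 : rk ({e, p} ∪ {e, q}) ≤ 1 := by
    rw [hep.1, heq.1] at hsub; omega
  have h3 : ({p, q} : Finset α) ⊆ ({e, p} ∪ {e, q}) := by
    intro x hx; simp at hx; rcases hx with rfl | rfl <;> simp
  have h4 := hrk.2.1 _ _ h3
  have h5 : 1 ≤ rk {p, q} := by
    have hs : ({p} : Finset α) ⊆ {p, q} := by intro x hx; simp at hx; subst hx; simp
    have := hrk.2.1 _ _ hs
    rw [hep.2.2] at this; exact this
  omega

lemma aux_pp_rank_one (hrk : IsRankFn rk) {A : Finset α} (hne : A.Nonempty)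
    (hpp : PairwiseParallel rk A) : rk A = 1 := by
  induction A using Finset.induction_on with
  | empty => exact absurd hne (by simp)
  | @insert f T hf ih =>
    rcases T.eq_empty_or_nonempty with rfl | hT
    · have h1 := hrk.1 {f}
      have h2 := hpp.2 f (by simp)
      simp at h1 ⊢
      omega
    · have hpT : PairwiseParallel rk T := aux_pp_subset (Finset.subset_insert f T) hpp
      have hT1 : rk T = 1 := ih hT hpT
      obtain ⟨e, he⟩ := hT
      have hef : e ≠ f := fun h => hf (h ▸ he)
      have hpar : Parallel rk e f :=
        hpp.1 e (Finset.mem_insert_of_mem he) f (Finset.mem_insert_self f T) hef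
      have hsub := hrk.2.2 {e, f} T
      have hun : ({e, f} : Finset α) ∪ T = insert f T := by
        ext x
        simp only [Finset.mem_union, Finset.mem_insert, Finset.mem_singleton]
        constructor
        · rintro ((rfl | rfl) | h)
          · exact Or.inr he
          · exact Or.inl rfl
          · exact Or.inr h
        · rintro (rfl | h)
          · exact Or.inl (Or.inr rfl)
          · exact Or.inr h
      have hint : ({e} : Finset α) ⊆ ({e, f} ∩ T) := by
        intro x hx; simp at hx; subst hx; simp [he]
      have h1 : 1 ≤ rk ({e, f} ∩ T) := by
        have := hrk.2.1 _ _ hint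
        rwa [hpar.2.1] at this
      rw [hun, hpar.1, hT1] at hsub
      have h2 : rk T ≤ rk (insert f T) := hrk.2.1 _ _ (Finset.subset_insert f T)
      omega

lemma aux_rank_one_pp (hrk : IsRankFn rk) (hl : Loopless rk) {A : Finset α}
    (hA : rk A = 1) : PairwiseParallel rk A := by
  constructor
  · intro e he f hf hef
    refine ⟨?_, aux_rk_singleton hrk hl e, aux_rk_singleton hrk hl f⟩
    have h1 : rk {e, f} ≤ 1 := by
      have hs : ({e, f} : Finset α) ⊆ A := by
        intro x hx; simp at hx; rcases hx with rfl | rfl <;> assumption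
      have := hrk.2.1 _ _ hs; omega
    have h2 : 1 ≤ rk {e, f} := by
      have hs : ({e} : Finset α) ⊆ {e, f} := by intro x hx; simp at hx; subst hx; simp
      have := hrk.2.1 _ _ hs
      rw [aux_rk_singleton hrk hl e] at this; exact this
    omega
  · exact fun e _ => hl e

lemma aux_rank_one_nonempty (hrk : IsRankFn rk) {A : Finset α} (hA : rk A = 1) :
    A.Nonempty := by
  rcases A.eq_empty_or_nonempty with rfl | h
  · have := hrk.1 (∅ : Finset α); simp at this; omega
  · exact h

lemma aux_exists_class (hrk : IsRankFn rk) {A : Finset α} (hne : A.Nonempty)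
    (hpp : PairwiseParallel rk A) :
    ∃ P ∈ parallelClasses rk Finset.univ, A ⊆ P := by
  classical
  set S : Finset (Finset α) :=
    Finset.univ.filter (fun Q => A ⊆ Q ∧ PairwiseParallel rk Q) with hS
  have hAS : A ∈ S := by simp [hS, hpp]
  obtain ⟨P, hPS, hmax⟩ := S.exists_maximal ⟨A, hAS⟩
  simp only [hS, Finset.mem_filter, Finset.mem_univ, true_and] at hPS
  refine ⟨P, ?_, hPS.1⟩
  simp only [parallelClasses, Finset.mem_filter, Finset.mem_univ, true_and]
  refine ⟨Finset.subset_univ P, hne.mono hPS.1, hPS.2, ?_⟩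
  intro Q _ hPQ hQpp
  exact hPQ.2 (hmax (by simp [hS, hPS.1.trans hPQ.subset, hQpp]) hPQ.subset)

lemma aux_class_union_pp (hrk : IsRankFn rk) {P Q : Finset α} {e : α}
    (hP : IsParallelClass rk Finset.univ P) (hQ : IsParallelClass rk Finset.univ Q)
    (heP : e ∈ P) (heQ : e ∈ Q) : PairwiseParallel rk (P ∪ Q) := by
  have key : ∀ p ∈ P ∪ Q, p ≠ e → Parallel rk e p := by
    intro p hp hpe
    rcases Finset.mem_union.mp hp with h | h
    · exact hP.2.2.1.1 e heP p h (Ne.symm hpe)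
    · exact hQ.2.2.1.1 e heQ p h (Ne.symm hpe)
  constructor
  · intro p hp q hq hpq
    by_cases hpe : p = e
    · subst hpe; exact key q hq (Ne.symm hpq)
    · by_cases hqe : q = e
      · subst hqe; exact aux_parallel_symm (key p hp hpe)
      · exact aux_parallel_trans hrk (key p hp hpe) (key q hq hqe) hpq
  · intro p hp
    rcases Finset.mem_union.mp hp with h | h
    · exact hP.2.2.1.2 p h
    · exact hQ.2.2.1.2 p h

lemma aux_class_unique (hrk : IsRankFn rk) {P Q : Finset α} {e : α}
    (hP : P ∈ parallelClasses rk Finset.univ) (hQ : Q ∈ parallelClasses rk Finset.univ)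
    (heP : e ∈ P) (heQ : e ∈ Q) : P = Q := by
  simp only [parallelClasses, Finset.mem_filter, Finset.mem_univ, true_and] at hP hQ
  have hpp := aux_class_union_pp hrk hP hQ heP heQ
  have h1 : P ∪ Q ⊆ P := by
    by_contra h
    exact hP.2.2.2 (P ∪ Q) (Finset.subset_univ _)
      (Finset.ssubset_iff_of_subset Finset.subset_union_left |>.mpr
        (by
          obtain ⟨x, hx⟩ := Finset.not_subset.mp h
          exact ⟨x, hx.1, hx.2⟩)) hpp
  have h2 : Q ∪ P ⊆ Q := by
    by_contra h
    exact hQ.2.2.2 (Q ∪ P) (Finset.subset_univ _)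
      (Finset.ssubset_iff_of_subset Finset.subset_union_left |>.mpr
        (by
          obtain ⟨x, hx⟩ := Finset.not_subset.mp h
          exact ⟨x, hx.1, hx.2⟩)) (by rwa [Finset.union_comm])
  exact Finset.Subset.antisymm
    (fun x hx => h2 (Finset.mem_union_right _ hx))
    (fun x hx => h1 (Finset.mem_union_right _ hx))

end Aux

/-- `t_{rk(M)-1,1} = p'(M)`. -/
theorem stmt10 {α : Type*} [Fintype α] [DecidableEq α]
    (rk : Finset α → ℕ) (hrk : IsRankFn rk) (hl : Loopless rk) :
    coeffT rk (rk Finset.univ - 1) 1 = (pNum' rk Finset.univ : ℤ) := by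
  classical
  have hterm : ∀ A : Finset α,
      MvPolynomial.coeff
        (Finsupp.single 0 (rk Finset.univ - 1) + Finsupp.single 1 1)
        ((X 0 - 1 : MvPolynomial (Fin 2) ℤ) ^ (rk Finset.univ - rk A)
          * (X 1 - 1) ^ (A.card - rk A))
      = if rk A = 1 then hFun A.card else 0 := by
    intro A
    rw [aux_coeff_xa_yb]
    by_cases h1 : rk A = 1
    · rw [if_pos h1, h1]
      rw [Nat.sub_self, Nat.choose_self, Nat.choose_one_right]
      rw [Nat.sub_sub]
      norm_num [hFun]
    · rw [if_neg h1]
      rcases Nat.lt_or_ge (rk A) 2 with h2 | h2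
      · have h0 : rk A = 0 := by omega
        have hAe : A = ∅ := by
          by_contra hne
          obtain ⟨e, he⟩ := Finset.nonempty_iff_ne_empty.mpr hne
          have hle := hrk.2.1 {e} A (by simpa using he)
          have hne' := hl e; omega
        subst hAe
        simp [h0]
      · have hle : rk A ≤ rk Finset.univ := hrk.2.1 _ _ (Finset.subset_univ A)
        rw [Nat.choose_eq_zero_of_lt
          (show rk Finset.univ - rk A < rk Finset.univ - 1 by omega)]
        ring
  have step1 : coeffT rk (rk Finset.univ - 1) 1
      = ∑ A ∈ Finset.univ.filter (fun A : Finset α => rk A = 1), hFun A.card := by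
    rw [coeffT, tutte, MvPolynomial.coeff_sum, Finset.sum_filter]
    exact Finset.sum_congr rfl (fun A _ => hterm A)
  have hcover : Finset.univ.filter (fun A : Finset α => rk A = 1)
      = (parallelClasses rk Finset.univ).biUnion (fun P => P.powerset.erase ∅) := by
    ext A
    simp only [Finset.mem_filter, Finset.mem_univ, true_and, Finset.mem_biUnion,
      Finset.mem_erase, Finset.mem_powerset]
    constructor
    · intro hA
      obtain ⟨P, hP, hAP⟩ := aux_exists_class hrk (aux_rank_one_nonempty hrk hA)
        (aux_rank_one_pp hrk hl hA)
      exact ⟨P, hP, Finset.nonempty_iff_ne_empty.mp (aux_rank_one_nonempty hrk hA), hAP⟩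
    · rintro ⟨P, hP, hAne, hAP⟩
      have hPc : IsParallelClass rk Finset.univ P := by
        simpa [parallelClasses] using hP
      exact aux_pp_rank_one hrk (Finset.nonempty_iff_ne_empty.mpr hAne)
        (aux_pp_subset hAP hPc.2.2.1)
  have hdisj : ((parallelClasses rk Finset.univ : Finset (Finset α)) : Set (Finset α)).PairwiseDisjoint
      (fun P => P.powerset.erase ∅) := by
    intro P hP Q hQ hPQ
    refine Finset.disjoint_left.mpr ?_
    intro A hAP hAQ
    simp only [Finset.mem_erase, Finset.mem_powerset] at hAP hAQ
    obtain ⟨e, he⟩ := Finset.nonempty_iff_ne_empty.mpr hAP.1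
    exact hPQ (aux_class_unique hrk (Finset.mem_coe.mp hP) (Finset.mem_coe.mp hQ)
      (hAP.2 he) (hAQ.2 he))
  have hinner : ∀ P ∈ parallelClasses rk Finset.univ,
      (∑ A ∈ P.powerset.erase ∅, hFun A.card) = if 2 ≤ P.card then (1:ℤ) else 0 := by
    intro P _
    have herase : (∑ A ∈ P.powerset.erase ∅, hFun A.card)
        = ∑ A ∈ P.powerset, hFun A.card :=
      Finset.sum_erase (f := fun A => hFun A.card) P.powerset (by simp [hFun_zero])
    rw [herase]
    rw [Finset.sum_powerset_apply_card]
    simp only [nsmul_eq_mul]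
    exact aux_Gval P.card
  rw [step1, hcover, Finset.sum_biUnion hdisj, Finset.sum_congr rfl hinner,
    Finset.sum_boole]
  rw [pNum']
end

section
/- Let M = (X, rk) be a finite matroid of rank 2 with no loops and no coloops. Then Σ_{A ⊆ X} (−1)^{|A|+1} (|A| − rk(A)) = p(M) − 2, where p(M) is the number of parallel classes of M. -/
open Finset MvPolynomial

open scoped Classical

noncomputable section AuxStmt18

open Finset

variable {α : Type*} [Fintype α] [DecidableEq α]

lemma rk_empty18 {rk : Finset α → ℕ} (hrk : IsRankFn rk) : rk ∅ = 0 := by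
  have := hrk.1 (∅ : Finset α); simpa using this

lemma rk_singleton18 {rk : Finset α → ℕ} (hrk : IsRankFn rk) (hl : Loopless rk) (e : α) :
    rk {e} = 1 := by
  have h1 := hrk.1 ({e} : Finset α)
  have h0 := hl e
  simp at h1
  omega

lemma parallel_self18 {rk : Finset α → ℕ} (hrk : IsRankFn rk) (hl : Loopless rk) (e : α) :
    Parallel rk e e := by
  have h := rk_singleton18 hrk hl e
  refine ⟨?_, h, h⟩
  have : ({e, e} : Finset α) = {e} := by simp
  rw [this, h]

lemma parallel_symm18 {rk : Finset α → ℕ} {e f : α} (h : Parallel rk e f) : Parallel rk f e := by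
  obtain ⟨h1, h2, h3⟩ := h
  exact ⟨by rwa [Finset.pair_comm], h3, h2⟩

lemma parallel_trans18 {rk : Finset α → ℕ} (hrk : IsRankFn rk) (hl : Loopless rk) {e f g : α}
    (h1 : Parallel rk e f) (h2 : Parallel rk f g) : Parallel rk e g := by
  have hsub := hrk.2.2 ({e, f} : Finset α) {f, g}
  have hf : ({f} : Finset α) ⊆ {e, f} ∩ {f, g} := by intro x; simp; tauto
  have hm := hrk.2.1 _ _ hf
  have heg : ({e, g} : Finset α) ⊆ {e, f} ∪ {f, g} := by intro x; simp; tauto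
  have hm2 := hrk.2.1 _ _ heg
  have hle : rk {e} ≤ rk {e, g} := hrk.2.1 _ _ (by intro x; simp; tauto)
  have hsf := rk_singleton18 hrk hl f
  have hse := rk_singleton18 hrk hl e
  have hsg := rk_singleton18 hrk hl g
  refine ⟨?_, hse, hsg⟩
  have hef := h1.1
  have hfg := h2.1
  omega

lemma rk_insert_pairwise18 {rk : Finset α → ℕ} (hrk : IsRankFn rk) (hl : Loopless rk) (e : α) :
    ∀ A : Finset α, (∀ f ∈ A, rk {e, f} = 1) → rk (insert e A) = 1 := by
  intro A
  induction A using Finset.induction_on with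
  | empty => intro _; simpa using rk_singleton18 hrk hl e
  | @insert f A _ ih =>
    intro h
    have hB : rk (insert e A) = 1 := ih (fun x hx => h x (mem_insert_of_mem hx))
    have hsub := hrk.2.2 (insert e A) ({e, f} : Finset α)
    have hu : insert e A ∪ ({e, f} : Finset α) = insert e (insert f A) := by
      ext x; simp
    rw [hu] at hsub
    have hi : ({e} : Finset α) ⊆ insert e A ∩ {e, f} := by intro x; simp; tauto
    have hm := hrk.2.1 _ _ hi
    have hef := h f (mem_insert_self f A)
    have hse := rk_singleton18 hrk hl e
    have hlow := hrk.2.1 ({e} : Finset α) (insert e (insert f A)) (by intro x; simp; tauto)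
    omega

lemma rk_eq_one_of18 {rk : Finset α → ℕ} (hrk : IsRankFn rk) (hl : Loopless rk) {A : Finset α}
    {e : α} (he : e ∈ A) (h : ∀ f ∈ A, rk {e, f} = 1) : rk A = 1 := by
  have := rk_insert_pairwise18 hrk hl e (A.erase e)
    (fun f hf => h f (Finset.mem_of_mem_erase hf))
  rwa [Finset.insert_erase he] at this

/-- The parallel class of `e`. -/
noncomputable def classOf18 (rk : Finset α → ℕ) (e : α) : Finset α :=
  Finset.univ.filter (fun f => Parallel rk e f)

lemma mem_classOf18 {rk : Finset α → ℕ} {e f : α} :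
    f ∈ classOf18 rk e ↔ Parallel rk e f := by simp [classOf18]

lemma pairwiseParallel_classOf18 {rk : Finset α → ℕ} (hrk : IsRankFn rk) (hl : Loopless rk)
    (e : α) : PairwiseParallel rk (classOf18 rk e) := by
  constructor
  · intro f hf g hg _
    exact parallel_trans18 hrk hl (parallel_symm18 (mem_classOf18.1 hf)) (mem_classOf18.1 hg)
  · intro f hf
    have := (mem_classOf18.1 hf).2.2
    omega

lemma classOf_isClass18 {rk : Finset α → ℕ} (hrk : IsRankFn rk) (hl : Loopless rk) (e : α) :
    IsParallelClass rk Finset.univ (classOf18 rk e) := by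
  have hself : e ∈ classOf18 rk e := mem_classOf18.2 (parallel_self18 hrk hl e)
  refine ⟨Finset.subset_univ _, ⟨e, hself⟩, pairwiseParallel_classOf18 hrk hl e, ?_⟩
  intro Q _ hPQ hQ
  obtain ⟨q, hqQ, hqP⟩ := Finset.exists_of_ssubset hPQ
  have heQ : e ∈ Q := hPQ.1 hself
  have hqe : q ≠ e := fun h => hqP (h ▸ hself)
  have : Parallel rk e q := hQ.1 e heQ q hqQ (Ne.symm hqe)
  exact hqP (mem_classOf18.2 this)

lemma class_eq_classOf18 {rk : Finset α → ℕ} (hrk : IsRankFn rk) (hl : Loopless rk)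
    {P : Finset α} (hP : IsParallelClass rk Finset.univ P) {e : α} (he : e ∈ P) :
    P = classOf18 rk e := by
  have hsub : P ⊆ classOf18 rk e := by
    intro f hf
    rw [mem_classOf18]
    by_cases hfe : f = e
    · subst hfe; exact parallel_self18 hrk hl f
    · exact hP.2.2.1.1 e he f hf (Ne.symm hfe)
  by_contra hne
  exact hP.2.2.2 (classOf18 rk e) (Finset.subset_univ _) (hsub.ssubset_of_ne hne)
    (pairwiseParallel_classOf18 hrk hl e)

lemma rk_eq_one_iff18 {rk : Finset α → ℕ} (hrk : IsRankFn rk) (hl : Loopless rk) {A : Finset α} :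
    rk A = 1 ↔ ∃ P ∈ parallelClasses rk Finset.univ, A ⊆ P ∧ A.Nonempty := by
  constructor
  · intro h
    have hAne : A.Nonempty := by
      rcases A.eq_empty_or_nonempty with rfl | hA
      · rw [rk_empty18 hrk] at h; omega
      · exact hA
    obtain ⟨e, he⟩ := hAne
    refine ⟨classOf18 rk e, ?_, ?_, ⟨e, he⟩⟩
    · simp [parallelClasses]; exact classOf_isClass18 hrk hl e
    · intro f hf
      rw [mem_classOf18]
      by_cases hfe : f = e
      · subst hfe; exact parallel_self18 hrk hl f
      · have hsub : ({e, f} : Finset α) ⊆ A := by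
          intro x hx; simp at hx; rcases hx with rfl | rfl <;> assumption
        have h1 := hrk.2.1 _ _ hsub
        have h2 : rk {e} ≤ rk ({e, f} : Finset α) := hrk.2.1 _ _ (by intro x; simp; tauto)
        have hse := rk_singleton18 hrk hl e
        exact ⟨by omega, hse, rk_singleton18 hrk hl f⟩
  · rintro ⟨P, hP, hAP, ⟨e, he⟩⟩
    rw [parallelClasses, Finset.mem_filter] at hP
    apply rk_eq_one_of18 hrk hl he
    intro f hf
    by_cases hfe : f = e
    · subst hfe
      have : ({f, f} : Finset α) = {f} := by simp
      rw [this]; exact rk_singleton18 hrk hl f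
    · exact (hP.2.2.2.1.1 e (hAP he) f (hAP hf) (Ne.symm hfe)).1

lemma filter_rk_one18 {rk : Finset α → ℕ} (hrk : IsRankFn rk) (hl : Loopless rk) :
    (Finset.univ.filter (fun A : Finset α => rk A = 1)) =
      (parallelClasses rk Finset.univ).biUnion (fun P => P.powerset.erase ∅) := by
  ext A
  simp only [Finset.mem_filter, Finset.mem_univ, true_and, Finset.mem_biUnion,
    Finset.mem_erase, Finset.mem_powerset]
  rw [rk_eq_one_iff18 hrk hl]
  constructor
  · rintro ⟨P, hP, hAP, hAne⟩
    exact ⟨P, hP, Finset.nonempty_iff_ne_empty.1 hAne, hAP⟩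
  · rintro ⟨P, hP, hAne, hAP⟩
    exact ⟨P, hP, hAP, Finset.nonempty_iff_ne_empty.2 hAne⟩

lemma sum_rk_one18 {rk : Finset α → ℕ} (hrk : IsRankFn rk) (hl : Loopless rk) :
    ∑ A ∈ Finset.univ.filter (fun A : Finset α => rk A = 1), (-1 : ℤ) ^ A.card =
      -(pNum rk Finset.univ : ℤ) := by
  rw [filter_rk_one18 hrk hl]
  rw [Finset.sum_biUnion]
  · have : ∀ P ∈ parallelClasses rk Finset.univ,
        ∑ A ∈ P.powerset.erase ∅, (-1 : ℤ) ^ A.card = -1 := by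
      intro P hP
      rw [parallelClasses, Finset.mem_filter] at hP
      have hPne : P.Nonempty := hP.2.2.1
      rw [Finset.sum_erase_eq_sub (Finset.empty_mem_powerset P)]
      rw [Finset.sum_powerset_neg_one_pow_card_of_nonempty hPne]
      simp
    rw [Finset.sum_congr rfl this]
    simp [pNum]
  · intro P hP Q hQ hPQ
    simp only [Finset.mem_coe] at hP hQ
    rw [parallelClasses, Finset.mem_filter] at hP hQ
    rw [Function.onFun, Finset.disjoint_left]
    intro A hA hA'
    simp only [Finset.mem_erase, Finset.mem_powerset] at hA hA'
    obtain ⟨e, he⟩ := Finset.nonempty_iff_ne_empty.2 hA.1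
    have h1 := class_eq_classOf18 hrk hl hP.2 (hA.2 he)
    have h2 := class_eq_classOf18 hrk hl hQ.2 (hA'.2 he)
    exact hPQ (h1.trans h2.symm)

lemma sum_alt_mem18 (e : α) (hn : 2 ≤ Fintype.card α) :
    ∑ A ∈ Finset.univ.filter (fun A : Finset α => e ∈ A), (-1 : ℤ) ^ A.card = 0 := by
  have himg : Finset.univ.filter (fun A : Finset α => e ∈ A) =
      ((Finset.univ.erase e).powerset).image (insert e) := by
    ext A
    simp only [Finset.mem_filter, Finset.mem_univ, true_and, Finset.mem_image,
      Finset.mem_powerset]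
    constructor
    · intro he
      refine ⟨A.erase e, ?_, Finset.insert_erase he⟩
      exact Finset.erase_subset_erase e (Finset.subset_univ A)
    · rintro ⟨B, _, rfl⟩; exact Finset.mem_insert_self e B
  rw [himg, Finset.sum_image]
  · have : ∀ B ∈ (Finset.univ.erase e).powerset,
        (-1 : ℤ) ^ (insert e B).card = -((-1 : ℤ) ^ B.card) := by
      intro B hB
      rw [Finset.mem_powerset] at hB
      have heB : e ∉ B := fun h => Finset.ne_of_mem_erase (hB h) rfl
      rw [Finset.card_insert_of_notMem heB, pow_succ]
      ring
    rw [Finset.sum_congr rfl this, Finset.sum_neg_distrib]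
    rw [Finset.sum_powerset_neg_one_pow_card_of_nonempty]
    · simp
    · rw [← Finset.card_pos, Finset.card_erase_of_mem (Finset.mem_univ e), Finset.card_univ]
      omega
  · intro B hB C hC h
    rw [Finset.mem_coe, Finset.mem_powerset] at hB hC
    have heB : e ∉ B := fun hx => Finset.ne_of_mem_erase (hB hx) rfl
    have heC : e ∉ C := fun hx => Finset.ne_of_mem_erase (hC hx) rfl
    have := congrArg (Finset.erase · e) h
    simpa [Finset.erase_insert heB, Finset.erase_insert heC] using this

lemma sum_alt_card18 (hn : 2 ≤ Fintype.card α) :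
    ∑ A : Finset α, (-1 : ℤ) ^ A.card * A.card = 0 := by
  have h1 : ∀ A : Finset α, (-1 : ℤ) ^ A.card * A.card = ∑ _e ∈ A, (-1 : ℤ) ^ A.card := by
    intro A; rw [Finset.sum_const]; push_cast; ring
  rw [Finset.sum_congr rfl (fun A _ => h1 A)]
  rw [Finset.sum_comm' (s' := fun e => Finset.univ.filter (fun A : Finset α => e ∈ A))
    (t' := Finset.univ) (by simp)]
  exact Finset.sum_eq_zero (fun e _ => sum_alt_mem18 e hn)

end AuxStmt18

/-- for a rank-2 matroid with no loops and no coloops,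
`Σ_{A ⊆ X} (-1)^{|A|+1} (|A| - rk(A)) = p(M) - 2`. -/
theorem stmt18 {α : Type*} [Fintype α] [DecidableEq α]
    (rk : Finset α → ℕ) (hrk : IsRankFn rk) (hl : Loopless rk)
    (hnc : ∀ e : α, rk (Finset.univ.erase e) ≠ rk Finset.univ - 1)
    (h2 : rk Finset.univ = 2) :
    ∑ A : Finset α, (-1 : ℤ) ^ (A.card + 1) * ((A.card : ℤ) - rk A) =
      (pNum rk Finset.univ : ℤ) - 2 := by
  have hn : 2 ≤ Fintype.card α := by
    have := hrk.1 Finset.univ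
    rw [h2, Finset.card_univ] at this
    exact this
  have hune : (Finset.univ : Finset α).Nonempty := by
    rw [← Finset.card_pos, Finset.card_univ]; omega
  have hSc : ∑ A : Finset α, (-1 : ℤ) ^ A.card = 0 := by
    rw [← Finset.powerset_univ]
    exact Finset.sum_powerset_neg_one_pow_card_of_nonempty hune
  have hScard := sum_alt_card18 (α := α) hn
  have hrk2 : ∀ A : Finset α, rk A ≤ 2 := fun A => h2 ▸ hrk.2.1 A Finset.univ (Finset.subset_univ A)
  have hsplit : ∀ A : Finset α, (rk A : ℤ) =
      2 - ((if A = ∅ then (2 : ℤ) else 0) + (if rk A = 1 then (1 : ℤ) else 0)) := by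
    intro A
    by_cases hA : A = ∅
    · subst hA; simp [rk_empty18 hrk]
    · have h0 : rk A ≠ 0 := by
        obtain ⟨e, he⟩ := Finset.nonempty_iff_ne_empty.2 hA
        have h1 := hrk.2.1 {e} A (Finset.singleton_subset_iff.2 he)
        have := rk_singleton18 hrk hl e
        omega
      by_cases h1 : rk A = 1
      · simp [hA, h1]
      · have h2' : rk A = 2 := by have := hrk2 A; omega
        simp [hA, h1, h2']
  have hSrk : ∑ A : Finset α, (-1 : ℤ) ^ A.card * (rk A : ℤ) =
      (pNum rk Finset.univ : ℤ) - 2 := by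
    have step : ∀ A : Finset α, (-1 : ℤ) ^ A.card * (rk A : ℤ) =
        (-1 : ℤ) ^ A.card * 2 - ((if A = ∅ then (-1 : ℤ) ^ A.card * 2 else 0) +
          (if rk A = 1 then (-1 : ℤ) ^ A.card else 0)) := by
      intro A
      rw [hsplit A]
      split <;> split <;> ring
    rw [Finset.sum_congr rfl (fun A _ => step A), Finset.sum_sub_distrib, Finset.sum_add_distrib]
    rw [← Finset.sum_mul, hSc]
    rw [Finset.sum_ite_eq' Finset.univ (∅ : Finset α) (fun A => (-1 : ℤ) ^ A.card * 2)]
    rw [← Finset.sum_filter, sum_rk_one18 hrk hl]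
    simp
    ring
  calc ∑ A : Finset α, (-1 : ℤ) ^ (A.card + 1) * ((A.card : ℤ) - rk A)
      = ∑ A : Finset α, ((-1 : ℤ) ^ A.card * (rk A : ℤ) - (-1 : ℤ) ^ A.card * A.card) := by
        apply Finset.sum_congr rfl
        intro A _
        rw [pow_succ]
        ring
    _ = (pNum rk Finset.univ : ℤ) - 2 := by
        rw [Finset.sum_sub_distrib, hSrk, hScard, sub_zero]
end
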